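/- In XCCS, the finite possible runs satisfy: R_f(0) = ∅, R_f(END) = {END}, R_f(P₁;P₂) = R_f(P₁) ∘ R_f(P₂), R_f(P₁+P₂) = R_f(P₁) ∪ R_f(P₂), and R_f(P*) = R_f(P)*, where ∘ is the END-absorbing concatenation ♮. -/
import Mathlib


/-- Running actions of XCCS over names `N`: input, output and the silent action. -/
inductive RAct (N : Type)
  | inp : N → RAct N
  | out : N → RAct N
  | tau : RAct N

/-- Complementary running actions. -/
def RAct.co {N : Type} : RAct N → RAct N → Prop := fun a b =>
  (∃ n, a = .inp n ∧ b = .out n) ∨ (∃ n, a = .out n ∧ b = .inp n)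

/-- XCCS actions: running actions together with the ending action `END`. -/
inductive XAct (N : Type)
  | run : RAct N → XAct N
  | END : XAct N

/-- XCCS process terms: the null process `0`, `END`, action prefix, sequential
composition, nondeterministic choice, parallel composition, iteration and
restriction. -/
inductive XP (N : Type)
  | zero : XP N
  | endp : XP N
  | pre : RAct N → XP N → XP N
  | seq : XP N → XP N → XP N
  | choice : XP N → XP N → XP N
  | par : XP N → XP N → XP N
  | star : XP N → XP N
  | res : Set N → XP N → XP N

/-- A running action is allowed through the restriction `\L` if it is `τ` or an
input/output on a channel not in `L`. -/
def allowed {N : Type} (L : Set N) : RAct N → Prop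
  | .inp a => a ∉ L
  | .out a => a ∉ L
  | .tau => True

mutual
/-- `XTm P` means `P →END ✓`: `P` can successfully finish. -/
inductive XTm {N : Type} : XP N → Prop
  | endp : XTm .endp
  | star {P : XP N} : XTm (.star P)
  | seq {P Q : XP N} : XTm P → XTm Q → XTm (.seq P Q)
  | choiceL {P Q : XP N} : XTm P → XTm (.choice P Q)
  | choiceR {P Q : XP N} : XTm Q → XTm (.choice P Q)
  | par {P Q : XP N} : XTm P → XTm Q → XTm (.par P Q)
  | res {L : Set N} {P : XP N} : XTm P → XTm (.res L P)

/-- Transitions `P →α P'` of XCCS for running actions `α`. -/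
inductive XTr {N : Type} : XP N → RAct N → XP N → Prop
  | pre {α : RAct N} {P : XP N} : XTr (.pre α P) α P
  | seqL {P P' Q : XP N} {α} : XTr P α P' → XTr (.seq P Q) α (.seq P' Q)
  | seqEnd {P Q Q' : XP N} {α} : XTm P → XTr Q α Q' → XTr (.seq P Q) α Q'
  | choiceL {P Q P' : XP N} {α} : XTr P α P' → XTr (.choice P Q) α P'
  | choiceR {P Q Q' : XP N} {α} : XTr Q α Q' → XTr (.choice P Q) α Q'
  | parL {P Q P' : XP N} {α} : XTr P α P' → XTr (.par P Q) α (.par P' Q)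
  | parR {P Q Q' : XP N} {α} : XTr Q α Q' → XTr (.par P Q) α (.par P Q')
  | sync {P Q P' Q' : XP N} {a b : RAct N} :
      RAct.co a b → XTr P a P' → XTr Q b Q' → XTr (.par P Q) (.tau) (.par P' Q')
  | star {P P' : XP N} {α} : XTr P α P' → XTr (.star P) α (.seq P' (.star P))
  | res {L : Set N} {P P' : XP N} {α} :
      XTr P α P' → allowed L α → XTr (.res L P) α (.res L P')
end

/-- `XRun P l` means `P ⇒l ✓`: `P` performs the sequence `l` (which necessarily
ends with `END`) and successfully finishes. -/
inductive XRun {N : Type} : XP N → List (XAct N) → Prop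
  | done {P : XP N} : XTm P → XRun P [.END]
  | cons {P P' : XP N} {α : RAct N} {l : List (XAct N)} :
      XTr P α P' → XRun P' l → XRun P (.run α :: l)

/-- The set of finite possible runs of an XCCS process. -/
def XRf {N : Type} (P : XP N) : Set (List (XAct N)) :=
  { l | XRun P l }

/-- `♮`: remove a trailing `END` from a sequence, if present. -/
def natl {N : Type} : List (XAct N) → List (XAct N)
  | [] => []
  | [XAct.END] => []
  | [a] => [a]
  | a :: l => a :: natl l

/-- `END`-absorbing concatenation of sets of sequences. -/
def xconc {N : Type} (R S : Set (List (XAct N))) : Set (List (XAct N)) :=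
  { l | ∃ a ∈ R, ∃ b ∈ S, l = natl a ++ b }

/-- Powers with respect to `♮`-concatenation; `R⁰ = {END}`, the identity for `∘`. -/
def xpow {N : Type} (R : Set (List (XAct N))) : ℕ → Set (List (XAct N))
  | 0 => {[XAct.END]}
  | n + 1 => xconc R (xpow R n)

/-- Kleene star with respect to `♮`-concatenation. -/
def xstar {N : Type} (R : Set (List (XAct N))) : Set (List (XAct N)) :=
  ⋃ n : ℕ, xpow R n

lemma XRun.ne_nil {N : Type} {P : XP N} {l} (h : XRun P l) : l ≠ [] := by
  cases h <;> simp

lemma natl_cons {N : Type} (a : XAct N) {l : List (XAct N)} (h : l ≠ []) :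
    natl (a :: l) = a :: natl l := by
  cases l with
  | nil => exact absurd rfl h
  | cons b t => simp [natl]

lemma seq_run_fwd {N : Type} : ∀ {R : XP N} {l}, XRun R l → ∀ P Q, R = .seq P Q →
    ∃ a, XRun P a ∧ ∃ b, XRun Q b ∧ l = natl a ++ b := by
  intro R l h
  induction h with
  | done ht =>
    intro P Q hR; subst hR
    cases ht with
    | seq h1 h2 => exact ⟨[.END], .done h1, [.END], .done h2, rfl⟩
  | cons htr hrun ih =>
    intro P Q hR; subst hR
    cases htr with
    | seqL h1 =>
      obtain ⟨a, ha, b, hb, rfl⟩ := ih _ _ rfl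
      refine ⟨_ :: a, .cons h1 ha, b, hb, ?_⟩
      rw [natl_cons _ ha.ne_nil]; rfl
    | seqEnd h1 h2 =>
      exact ⟨[.END], .done h1, _, .cons h2 hrun, rfl⟩

lemma tm_seq_run {N : Type} {P Q : XP N} (hP : XTm P) {b} (hQ : XRun Q b) :
    XRun (XP.seq P Q) b := by
  cases hQ with
  | done ht => exact .done (.seq hP ht)
  | cons htr hrun => exact .cons (.seqEnd hP htr) hrun

lemma seq_run_bwd {N : Type} {P : XP N} {a} (hP : XRun P a) :
    ∀ {Q b}, XRun Q b → XRun (XP.seq P Q) (natl a ++ b) := by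
  induction hP with
  | done ht => intro Q b hQ; exact tm_seq_run ht hQ
  | cons htr hrun ih =>
    intro Q b hQ
    rw [natl_cons _ hrun.ne_nil]
    exact .cons (.seqL htr) (ih hQ)

lemma XRf_seq {N : Type} (P Q : XP N) :
    XRf (XP.seq P Q) = xconc (XRf P) (XRf Q) := by
  ext l
  constructor
  · intro h
    obtain ⟨a, ha, b, hb, rfl⟩ := seq_run_fwd h P Q rfl
    exact ⟨a, ha, b, hb, rfl⟩
  · rintro ⟨a, ha, b, hb, rfl⟩
    exact seq_run_bwd ha hb

lemma star_run_fwd {N : Type} (P : XP N) :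
    ∀ n l, l.length ≤ n → XRun (XP.star P) l → ∃ m, l ∈ xpow (XRf P) m := by
  intro n
  induction n with
  | zero => intro l hl h; simp [Nat.le_zero, List.length_eq_zero_iff] at hl
            exact absurd hl h.ne_nil
  | succ n ih =>
    intro l hl h
    cases h with
    | done ht => exact ⟨0, rfl⟩
    | @cons _ P' α l' htr hrun =>
      cases htr with
      | star h1 =>
        obtain ⟨a, ha, b, hb, rfl⟩ := seq_run_fwd hrun _ _ rfl
        obtain ⟨m, hm⟩ := ih b (by
          have := hl
          simp only [List.length_cons, List.length_append] at this ⊢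
          omega) hb
        refine ⟨m + 1, XAct.run α :: a, .cons h1 ha, b, hm, ?_⟩
        rw [natl_cons _ ha.ne_nil]; rfl

lemma star_run_bwd {N : Type} {P : XP N} {a} (hP : XRun P a) :
    ∀ {b}, XRun (XP.star P) b → XRun (XP.star P) (natl a ++ b) := by
  cases hP with
  | done ht => intro b hb; exact hb
  | cons htr hrun =>
    intro b hb
    rw [natl_cons _ hrun.ne_nil]
    exact .cons (.star htr) (seq_run_bwd hrun hb)

lemma XRf_star {N : Type} (P : XP N) :
    XRf (XP.star P) = xstar (XRf P) := by
  ext l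
  constructor
  · intro h
    obtain ⟨m, hm⟩ := star_run_fwd P l.length l le_rfl h
    exact Set.mem_iUnion.2 ⟨m, hm⟩
  · intro h
    obtain ⟨m, hm⟩ := Set.mem_iUnion.1 h
    clear h
    induction m generalizing l with
    | zero => cases hm; exact .done .star
    | succ m ih =>
      obtain ⟨a, ha, b, hb, rfl⟩ := hm
      exact star_run_bwd ha (ih _ hb)

/-- In XCCS the finite possible runs satisfy: `R_f(0) = ∅`, `R_f(END) = {END}`,
`R_f(P₁;P₂) = R_f(P₁) ∘ R_f(P₂)`, `R_f(P₁+P₂) = R_f(P₁) ∪ R_f(P₂)` and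
`R_f(P*) = R_f(P)*`, where `∘` is the `END`-absorbing concatenation. -/
theorem XRf_equalities {N : Type} (P P₁ P₂ : XP N) :
    XRf (XP.zero : XP N) = ∅ ∧
    XRf (XP.endp : XP N) = {[XAct.END]} ∧
    XRf (XP.seq P₁ P₂) = xconc (XRf P₁) (XRf P₂) ∧
    XRf (XP.choice P₁ P₂) = XRf P₁ ∪ XRf P₂ ∧
    XRf (XP.star P) = xstar (XRf P) := by
  refine ⟨?_, ?_, XRf_seq P₁ P₂, ?_, XRf_star P⟩
  · ext l
    simp only [Set.mem_empty_iff_false, iff_false]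
    intro h
    cases h with
    | done ht => cases ht
    | cons htr _ => cases htr
  · ext l
    constructor
    · intro h
      cases h with
      | done ht => rfl
      | cons htr _ => cases htr
    · rintro rfl
      exact .done .endp
  · ext l
    constructor
    · intro h
      cases h with
      | done ht =>
        cases ht with
        | choiceL h1 => exact Or.inl (.done h1)
        | choiceR h1 => exact Or.inr (.done h1)
      | cons htr hrun =>
        cases htr with
        | choiceL h1 => exact Or.inl (.cons h1 hrun)
        | choiceR h1 => exact Or.inr (.cons h1 hrun)
    · rintro (h | h) <;> cases h with
      | done ht => exact .done (by first | exact .choiceL ht | exact .choiceR ht)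
      | cons htr hrun => exact .cons (by first | exact .choiceL htr | exact .choiceR htr) hrun
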